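/- A proposition A has a classical proof if and only if its Kolmogorov–Gödel–Gentzen translation A′ has a constructive proof, where A′ is defined by: P′ = ¬¬P for atomic P; (∗)′ = ¬¬∗ for nullary connectives ∗ ∈ {⊤, ⊥}; (¬A)′ = ¬¬¬(A′); (A ∗ B)′ = ¬¬(A′ ∗ B′) for ∗ ∈ {∧, ∨, ⇒}; (∗x A)′ = ¬¬(∗x A′) for ∗ ∈ {∀, ∃}. -/

import Mathlib

/-- Terms: de Bruijn variables and a binary function symbol (union). -/
inductive Tm : Type where
  | var : Nat → Tm
  | cup : Tm → Tm → Tm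
deriving DecidableEq

def Tm.rename (f : Nat → Nat) : Tm → Tm
  | .var n => .var (f n)
  | .cup s t => .cup (s.rename f) (t.rename f)

def Tm.subst (σ : Nat → Tm) : Tm → Tm
  | .var n => σ n
  | .cup s t => .cup (s.subst σ) (t.subst σ)

/-- First-order formulas over Nat-indexed predicate symbols, de Bruijn binders. -/
inductive Fm : Type where
  | atom : Nat → List Tm → Fm
  | top : Fm
  | bot : Fm
  | neg : Fm → Fm
  | and : Fm → Fm → Fm
  | or : Fm → Fm → Fm
  | imp : Fm → Fm → Fm
  | all : Fm → Fm
  | ex : Fm → Fm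
deriving DecidableEq

def liftR (f : Nat → Nat) : Nat → Nat
  | 0 => 0
  | n + 1 => f n + 1

def liftS (σ : Nat → Tm) : Nat → Tm
  | 0 => .var 0
  | n + 1 => (σ n).rename Nat.succ

def Fm.rename (f : Nat → Nat) : Fm → Fm
  | .atom p l => .atom p (l.map (Tm.rename f))
  | .top => .top
  | .bot => .bot
  | .neg A => .neg (A.rename f)
  | .and A B => .and (A.rename f) (B.rename f)
  | .or A B => .or (A.rename f) (B.rename f)
  | .imp A B => .imp (A.rename f) (B.rename f)
  | .all A => .all (A.rename (liftR f))
  | .ex A => .ex (A.rename (liftR f))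

def Fm.subst (σ : Nat → Tm) : Fm → Fm
  | .atom p l => .atom p (l.map (Tm.subst σ))
  | .top => .top
  | .bot => .bot
  | .neg A => .neg (A.subst σ)
  | .and A B => .and (A.subst σ) (B.subst σ)
  | .or A B => .or (A.subst σ) (B.subst σ)
  | .imp A B => .imp (A.subst σ) (B.subst σ)
  | .all A => .all (A.subst (liftS σ))
  | .ex A => .ex (A.subst (liftS σ))

/-- Shift all free variables up by one. -/
def Fm.shift (A : Fm) : Fm := A.rename Nat.succ

/-- Instantiate the outermost bound variable with term `t` : `(t/x)A`. -/
def Fm.inst (t : Tm) (A : Fm) : Fm :=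
  A.subst (fun n => match n with | 0 => t | n + 1 => .var n)

/-- Double negation. -/
def Fm.dn (A : Fm) : Fm := .neg (.neg A)

/-- Cut-free classical multi-conclusion sequent calculus (Figure 1). -/
inductive Cl : List Fm → List Fm → Prop where
  | ax (A : Fm) : Cl [A] [A]
  | perm {Γ Γ' Δ Δ'} : Γ.Perm Γ' → Δ.Perm Δ' → Cl Γ Δ → Cl Γ' Δ'
  | contrL {Γ Δ A} : Cl (A :: A :: Γ) Δ → Cl (A :: Γ) Δ
  | contrR {Γ Δ A} : Cl Γ (A :: A :: Δ) → Cl Γ (A :: Δ)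
  | weakL {Γ Δ A} : Cl Γ Δ → Cl (A :: Γ) Δ
  | weakR {Γ Δ A} : Cl Γ Δ → Cl Γ (A :: Δ)
  | topR {Γ Δ} : Cl Γ (.top :: Δ)
  | botL {Γ Δ} : Cl (.bot :: Γ) Δ
  | negL {Γ Δ A} : Cl Γ (A :: Δ) → Cl (.neg A :: Γ) Δ
  | negR {Γ Δ A} : Cl (A :: Γ) Δ → Cl Γ (.neg A :: Δ)
  | andL {Γ Δ A B} : Cl (A :: B :: Γ) Δ → Cl (.and A B :: Γ) Δ
  | andR {Γ Δ A B} : Cl Γ (A :: Δ) → Cl Γ (B :: Δ) → Cl Γ (.and A B :: Δ)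
  | orL {Γ Δ A B} : Cl (A :: Γ) Δ → Cl (B :: Γ) Δ → Cl (.or A B :: Γ) Δ
  | orR1 {Γ Δ A B} : Cl Γ (A :: Δ) → Cl Γ (.or A B :: Δ)
  | orR2 {Γ Δ A B} : Cl Γ (B :: Δ) → Cl Γ (.or A B :: Δ)
  | impL {Γ Δ A B} : Cl Γ (A :: Δ) → Cl (B :: Γ) Δ → Cl (.imp A B :: Γ) Δ
  | impR {Γ Δ A B} : Cl (A :: Γ) (B :: Δ) → Cl Γ (.imp A B :: Δ)
  | allL {Γ Δ A} (t : Tm) : Cl (A.inst t :: Γ) Δ → Cl (.all A :: Γ) Δ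
  | allR {Γ Δ A} : Cl (Γ.map Fm.shift) (A :: Δ.map Fm.shift) → Cl Γ (.all A :: Δ)
  | exL {Γ Δ A} : Cl (A :: Γ.map Fm.shift) (Δ.map Fm.shift) → Cl (.ex A :: Γ) Δ
  | exR {Γ Δ A} (t : Tm) : Cl Γ (A.inst t :: Δ) → Cl Γ (.ex A :: Δ)

/-- Constructive (intuitionistic) single-conclusion sequent calculus:
the restriction of the classical calculus to sequents with at most one
conclusion, with the adapted ⇒-left rule. -/
inductive Intu : List Fm → Option Fm → Prop where
  | ax (A : Fm) : Intu [A] (some A)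
  | perm {Γ Γ' Δ} : Γ.Perm Γ' → Intu Γ Δ → Intu Γ' Δ
  | contrL {Γ Δ A} : Intu (A :: A :: Γ) Δ → Intu (A :: Γ) Δ
  | weakL {Γ Δ A} : Intu Γ Δ → Intu (A :: Γ) Δ
  | weakR {Γ A} : Intu Γ none → Intu Γ (some A)
  | topR {Γ} : Intu Γ (some .top)
  | botL {Γ Δ} : Intu (.bot :: Γ) Δ
  | negL {Γ A} : Intu Γ (some A) → Intu (.neg A :: Γ) none
  | negR {Γ A} : Intu (A :: Γ) none → Intu Γ (some (.neg A))
  | andL {Γ Δ A B} : Intu (A :: B :: Γ) Δ → Intu (.and A B :: Γ) Δ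
  | andR {Γ A B} : Intu Γ (some A) → Intu Γ (some B) → Intu Γ (some (.and A B))
  | orL {Γ Δ A B} : Intu (A :: Γ) Δ → Intu (B :: Γ) Δ → Intu (.or A B :: Γ) Δ
  | orR1 {Γ A B} : Intu Γ (some A) → Intu Γ (some (.or A B))
  | orR2 {Γ A B} : Intu Γ (some B) → Intu Γ (some (.or A B))
  | impL {Γ Δ A B} : Intu Γ (some A) → Intu (B :: Γ) Δ → Intu (.imp A B :: Γ) Δ
  | impR {Γ A B} : Intu (A :: Γ) (some B) → Intu Γ (some (.imp A B))
  | allL {Γ Δ A} (t : Tm) : Intu (A.inst t :: Γ) Δ → Intu (.all A :: Γ) Δ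
  | allR {Γ A} : Intu (Γ.map Fm.shift) (some A) → Intu Γ (some (.all A))
  | exL {Γ Δ A} : Intu (A :: Γ.map Fm.shift) (Δ.map Fm.shift) → Intu (.ex A :: Γ) Δ
  | exR {Γ A} (t : Tm) : Intu Γ (some (A.inst t)) → Intu Γ (some (.ex A))

/-- Dowek's translation ‖·‖: double negations both before and after each
connective and quantifier, atoms unchanged. -/
def Fm.bar : Fm → Fm
  | .atom p l => .atom p l
  | .top => Fm.dn .top
  | .bot => Fm.dn .bot
  | .neg A => Fm.dn (Fm.dn (.neg A.bar))
  | .and A B => Fm.dn (.and (Fm.dn A.bar) (Fm.dn B.bar))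
  | .or A B => Fm.dn (.or (Fm.dn A.bar) (Fm.dn B.bar))
  | .imp A B => Fm.dn (.imp (Fm.dn A.bar) (Fm.dn B.bar))
  | .all A => Fm.dn (.all (Fm.dn A.bar))
  | .ex A => Fm.dn (.ex (Fm.dn A.bar))

/-- The light translation |·|: like ‖·‖ but the outermost double negation
is removed. -/
def Fm.light : Fm → Fm
  | .atom p l => .atom p l
  | .top => .top
  | .bot => .bot
  | .neg A => .neg (Fm.dn A.bar)
  | .and A B => .and (Fm.dn A.bar) (Fm.dn B.bar)
  | .or A B => .or (Fm.dn A.bar) (Fm.dn B.bar)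
  | .imp A B => .imp (Fm.dn A.bar) (Fm.dn B.bar)
  | .all A => .all (Fm.dn A.bar)
  | .ex A => .ex (Fm.dn A.bar)

/-- A formula is atomic if it is of the form `atom p l`. -/
def Fm.isAtom : Fm → Prop
  | .atom _ _ => True
  | _ => False


/-- The Kolmogorov–Gödel–Gentzen double-negation translation. -/
def Fm.kgg : Fm → Fm
  | .atom p l => Fm.dn (.atom p l)
  | .top => Fm.dn .top
  | .bot => Fm.dn .bot
  | .neg A => Fm.dn (.neg A.kgg)
  | .and A B => Fm.dn (.and A.kgg B.kgg)
  | .or A B => Fm.dn (.or A.kgg B.kgg)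
  | .imp A B => Fm.dn (.imp A.kgg B.kgg)
  | .all A => Fm.dn (.all A.kgg)
  | .ex A => Fm.dn (.ex A.kgg)

/-!
A classical derivation of `Γ ⊢ Δ` is simulated rule by rule by an intuitionistic refutation of
`Γᵏ, ¬Δᵏ`: the double negation in front of every subformula of a translation is exactly what
makes each classical rule, applied under a negated conclusion, intuitionistically valid.

Conversely an intuitionistic derivation is a classical one, but without cut `Aᵏ ⊢ A` cannot be
used. Instead the double negations are erased throughout the cut-free classical derivation of
`⊢ Aᵏ`: each formula of the derivation is tracked by a formula of the target sequent that
differs from it only by double negations, or by an odd number of negations and the side it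
stands on, and every rule is replayed on the tracked formulas, axioms being η-expanded.
-/

theorem Tm.subst_rename (f : Nat → Nat) (σ : Nat → Tm) (t : Tm) :
    (t.rename f).subst σ = t.subst (σ ∘ f) := by
  induction t <;> simp_all [Tm.rename, Tm.subst]

theorem Fm.subst_rename (A : Fm) (f : Nat → Nat) (σ : Nat → Tm) :
    (A.rename f).subst σ = A.subst (σ ∘ f) := by
  have liftS_comp_liftR (σ : Nat → Tm) (f : Nat → Nat) :
      liftS σ ∘ liftR f = liftS (σ ∘ f) := by
    funext n; cases n <;> rfl
  induction A generalizing f σ <;>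
    simp_all [Fm.rename, Fm.subst, Tm.subst_rename]

theorem Tm.subst_var (t : Tm) : t.subst .var = t := by
  induction t <;> simp_all [Tm.subst]

theorem Fm.subst_var (A : Fm) : A.subst .var = A := by
  have liftS_var : liftS .var = .var := by
    funext n; cases n <;> rfl
  have tm_subst_var : Tm.subst .var = id := funext Tm.subst_var
  induction A <;> simp_all [Fm.subst]

theorem Fm.inst_var_zero_rename_liftR_succ (A : Fm) :
    (A.rename (liftR Nat.succ)).inst (.var 0) = A := by
  rw [Fm.inst, Fm.subst_rename]
  convert A.subst_var using 2
  funext n; cases n <;> rfl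

theorem Fm.kgg_rename (A : Fm) (f : Nat → Nat) : (A.rename f).kgg = A.kgg.rename f := by
  induction A generalizing f <;> simp_all [Fm.rename, Fm.kgg, Fm.dn]

theorem Fm.kgg_subst (A : Fm) (σ : Nat → Tm) : (A.subst σ).kgg = A.kgg.subst σ := by
  induction A generalizing σ <;> simp_all [Fm.subst, Fm.kgg, Fm.dn]

theorem Fm.kgg_inst (A : Fm) (t : Tm) : (A.inst t).kgg = A.kgg.inst t :=
  A.kgg_subst _

theorem Fm.kgg_shift (A : Fm) : A.shift.kgg = A.kgg.shift :=
  A.kgg_rename _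

def Fm.kggBody : Fm → Fm
  | .atom p l => .atom p l
  | .top => .top
  | .bot => .bot
  | .neg A => .neg A.kgg
  | .and A B => .and A.kgg B.kgg
  | .or A B => .or A.kgg B.kgg
  | .imp A B => .imp A.kgg B.kgg
  | .all A => .all A.kgg
  | .ex A => .ex A.kgg

theorem Fm.kgg_eq_dn_kggBody (A : Fm) : A.kgg = A.kggBody.dn := by
  cases A <;> rfl

theorem Fm.kggBody_shift (A : Fm) : A.shift.kggBody = A.kggBody.shift := by
  cases A <;> simp [Fm.shift, Fm.rename, Fm.kggBody, Fm.kgg_rename]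

/-- The classical sequent `Γ ⊢ Δ` becomes the intuitionistic antecedent `Γᵏ, ¬Δᵇ`, where `Aᵇ` is
`A.kggBody`; `¬Aᵇ` is `¬Aᵏ = ¬¬¬Aᵇ` without its redundant double negation. -/
def kggSequent (Γ Δ : List Fm) : List Fm :=
  Γ.map Fm.kgg ++ Δ.map fun B => .neg B.kggBody

theorem kggSequent_shift (Γ Δ : List Fm) :
    kggSequent (Γ.map Fm.shift) (Δ.map Fm.shift) = (kggSequent Γ Δ).map Fm.shift := by
  simp only [kggSequent, List.map_append, List.map_map]
  congr 1 <;> refine List.map_congr_left fun A _ => ?_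
  · exact A.kgg_shift
  · exact congrArg Fm.neg A.kggBody_shift

theorem kggSequent_cons_right_perm (Γ Δ : List Fm) (A : Fm) :
    (kggSequent Γ (A :: Δ)).Perm (.neg A.kggBody :: kggSequent Γ Δ) :=
  List.perm_middle

theorem Intu.kgg_of_cons_right {Γ Δ A} (h : Intu (kggSequent Γ (A :: Δ)) none) :
    Intu (kggSequent Γ Δ) (some A.kgg) := by
  rw [Fm.kgg_eq_dn_kggBody]
  exact .negR (.perm (kggSequent_cons_right_perm Γ Δ A) h)

theorem Intu.cons_right_of_kggBody {Γ Δ A} (h : Intu (kggSequent Γ Δ) (some A.kggBody)) :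
    Intu (kggSequent Γ (A :: Δ)) none :=
  .perm (kggSequent_cons_right_perm Γ Δ A).symm (.negL h)

theorem Intu.cons_left_of_kggBody {Γ Δ A} (h : Intu (A.kggBody :: kggSequent Γ Δ) none) :
    Intu (kggSequent (A :: Γ) Δ) none := by
  change Intu (A.kgg :: kggSequent Γ Δ) none
  rw [Fm.kgg_eq_dn_kggBody]
  exact .negL (.negR h)

theorem Cl.intu_kggSequent {Γ Δ} (h : Cl Γ Δ) : Intu (kggSequent Γ Δ) none := by
  induction h with
  | ax A => exact .cons_left_of_kggBody (.perm (.swap _ _ _) (.negL (.ax _)))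
  | perm hΓ hΔ _ ih => exact .perm ((hΓ.map _).append (hΔ.map _)) ih
  | contrL _ ih => exact .contrL ih
  | contrR _ ih =>
    have hp := kggSequent_cons_right_perm
    exact .perm (hp _ _ _).symm (.contrL (.perm ((hp _ _ _).trans (.cons _ (hp _ _ _))) ih))
  | weakL _ ih => exact .weakL ih
  | weakR _ ih => exact .perm (kggSequent_cons_right_perm _ _ _).symm (.weakL ih)
  | topR => exact .cons_right_of_kggBody .topR
  | botL => exact .cons_left_of_kggBody .botL
  | negL _ ih => exact .cons_left_of_kggBody (.negL (.kgg_of_cons_right ih))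
  | negR _ ih => exact .cons_right_of_kggBody (.negR ih)
  | andL _ ih => exact .cons_left_of_kggBody (.andL ih)
  | andR _ _ ih₁ ih₂ =>
    exact .cons_right_of_kggBody (.andR ih₁.kgg_of_cons_right ih₂.kgg_of_cons_right)
  | orL _ _ ih₁ ih₂ => exact .cons_left_of_kggBody (.orL ih₁ ih₂)
  | orR1 _ ih => exact .cons_right_of_kggBody (.orR1 (.kgg_of_cons_right ih))
  | orR2 _ ih => exact .cons_right_of_kggBody (.orR2 (.kgg_of_cons_right ih))
  | impL _ _ ih₁ ih₂ => exact .cons_left_of_kggBody (.impL ih₁.kgg_of_cons_right ih₂)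
  | impR _ ih => exact .cons_right_of_kggBody (.impR ih.kgg_of_cons_right)
  | allL t _ ih =>
    refine .cons_left_of_kggBody (.allL t ?_)
    rwa [← Fm.kgg_inst]
  | allR _ ih =>
    refine .cons_right_of_kggBody (.allR ?_)
    rw [← kggSequent_shift]
    exact .kgg_of_cons_right ih
  | exL _ ih =>
    refine .cons_left_of_kggBody (.exL ?_)
    rwa [← kggSequent_shift]
  | exR t _ ih =>
    refine .cons_right_of_kggBody (.exR t ?_)
    rw [← Fm.kgg_inst]
    exact .kgg_of_cons_right ih

theorem Cl.append_left {Γ Δ} (Θ : List Fm) (h : Cl Γ Δ) : Cl (Θ ++ Γ) Δ := by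
  induction Θ with
  | nil => exact h
  | cons _ _ ih => exact .weakL ih

theorem Cl.append_right {Γ Δ} (Θ : List Fm) (h : Cl Γ Δ) : Cl Γ (Θ ++ Δ) := by
  induction Θ with
  | nil => exact h
  | cons _ _ ih => exact .weakR ih

theorem Cl.weaken {Γ₀ Δ₀} (h : Cl Γ₀ Δ₀) (Γ Δ : List Fm) : Cl (Γ₀ ++ Γ) (Δ₀ ++ Δ) :=
  .perm List.perm_append_comm List.perm_append_comm ((h.append_right Δ).append_left Γ)

theorem Cl.contrL_of_mem {Γ Δ C} (hC : C ∈ Γ) (h : Cl (C :: Γ) Δ) : Cl Γ Δ := by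
  have hp := List.perm_cons_erase hC
  exact .perm hp.symm (.refl _) (.contrL (.perm (hp.cons C) (.refl _) h))

theorem Cl.contrR_of_mem {Γ Δ C} (hC : C ∈ Δ) (h : Cl Γ (C :: Δ)) : Cl Γ Δ := by
  have hp := List.perm_cons_erase hC
  exact .perm (.refl _) hp.symm (.contrR (.perm (.refl _) (hp.cons C) h))

theorem Intu.toCl {Γ δ} (h : Intu Γ δ) : Cl Γ δ.toList := by
  induction h with
  | ax A => exact .ax A
  | perm hΓ _ ih => exact .perm hΓ (.refl _) ih
  | contrL _ ih => exact .contrL ih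
  | weakL _ ih => exact .weakL ih
  | weakR _ ih => exact .weakR ih
  | topR => exact .topR
  | botL => exact .botL
  | negL _ ih => exact .negL ih
  | negR _ ih => exact .negR ih
  | andL _ ih => exact .andL ih
  | andR _ _ ih₁ ih₂ => exact .andR ih₁ ih₂
  | orL _ _ ih₁ ih₂ => exact .orL ih₁ ih₂
  | orR1 _ ih => exact .orR1 ih
  | orR2 _ ih => exact .orR2 ih
  | impL _ _ ih₁ ih₂ => exact .impL (by simpa using ih₁.weaken [] _) ih₂
  | impR _ ih => exact .impR ih
  | allL t _ ih => exact .allL t ih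
  | allR _ ih => exact .allR ih
  | exL _ ih => exact .exL (Option.toList_map .. ▸ ih)
  | exR t _ ih => exact .exR t ih

inductive ErasesTo : Fm → Fm → Prop where
  | atom (p l) : ErasesTo (.atom p l) (.atom p l)
  | top : ErasesTo .top .top
  | bot : ErasesTo .bot .bot
  | dn {X C} : ErasesTo X C → ErasesTo X.dn C
  | neg {X C} : ErasesTo X C → ErasesTo (.neg X) (.neg C)
  | and {X Y C D} : ErasesTo X C → ErasesTo Y D → ErasesTo (.and X Y) (.and C D)
  | or {X Y C D} : ErasesTo X C → ErasesTo Y D → ErasesTo (.or X Y) (.or C D)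
  | imp {X Y C D} : ErasesTo X C → ErasesTo Y D → ErasesTo (.imp X Y) (.imp C D)
  | all {X C} : ErasesTo X C → ErasesTo (.all X) (.all C)
  | ex {X C} : ErasesTo X C → ErasesTo (.ex X) (.ex C)

theorem ErasesTo.kgg (A : Fm) : ErasesTo A.kgg A := by
  induction A with
  | atom p l => exact .dn (.atom p l)
  | top => exact .dn .top
  | bot => exact .dn .bot
  | neg _ ih => exact .dn (.neg ih)
  | and _ _ ih₁ ih₂ => exact .dn (.and ih₁ ih₂)
  | or _ _ ih₁ ih₂ => exact .dn (.or ih₁ ih₂)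
  | imp _ _ ih₁ ih₂ => exact .dn (.imp ih₁ ih₂)
  | all _ ih => exact .dn (.all ih)
  | ex _ ih => exact .dn (.ex ih)

theorem ErasesTo.rename {X C} (h : ErasesTo X C) (f : Nat → Nat) :
    ErasesTo (X.rename f) (C.rename f) := by
  induction h generalizing f with
  | atom p l => exact .atom p _
  | top => exact .top
  | bot => exact .bot
  | dn _ ih => exact .dn (ih f)
  | neg _ ih => exact .neg (ih f)
  | and _ _ ih₁ ih₂ => exact .and (ih₁ f) (ih₂ f)
  | or _ _ ih₁ ih₂ => exact .or (ih₁ f) (ih₂ f)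
  | imp _ _ ih₁ ih₂ => exact .imp (ih₁ f) (ih₂ f)
  | all _ ih => exact .all (ih _)
  | ex _ ih => exact .ex (ih _)

theorem ErasesTo.subst {X C} (h : ErasesTo X C) (σ : Nat → Tm) :
    ErasesTo (X.subst σ) (C.subst σ) := by
  induction h generalizing σ with
  | atom p l => exact .atom p _
  | top => exact .top
  | bot => exact .bot
  | dn _ ih => exact .dn (ih σ)
  | neg _ ih => exact .neg (ih σ)
  | and _ _ ih₁ ih₂ => exact .and (ih₁ σ) (ih₂ σ)
  | or _ _ ih₁ ih₂ => exact .or (ih₁ σ) (ih₂ σ)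
  | imp _ _ ih₁ ih₂ => exact .imp (ih₁ σ) (ih₂ σ)
  | all _ ih => exact .all (ih _)
  | ex _ ih => exact .ex (ih _)

inductive Side where
  | left
  | right

def Side.flip : Side → Side
  | left => right
  | right => left

@[simp]
theorem Side.flip_flip (s : Side) : s.flip.flip = s := by
  cases s <;> rfl

/-- `Occurs Γ Δ s C`: `¬ⁿC` belongs to the sequent `Γ ⊢ Δ`, on side `s` if `n` is even and on
the other side if `n` is odd. -/
inductive Occurs (Γ Δ : List Fm) : Side → Fm → Prop where
  | left {C} : C ∈ Γ → Occurs Γ Δ .left C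
  | right {C} : C ∈ Δ → Occurs Γ Δ .right C
  | neg {s C} : Occurs Γ Δ s (.neg C) → Occurs Γ Δ s.flip C

def ClWith (Γ Δ : List Fm) : Side → Fm → Prop
  | .left, C => Cl (C :: Γ) Δ
  | .right, C => Cl Γ (C :: Δ)

/-- `C` is contracted with its occurrence `¬ⁿC` once the `n` negations are introduced. -/
theorem Occurs.elim {Γ Δ s C} (h : Occurs Γ Δ s C) (hC : ClWith Γ Δ s C) : Cl Γ Δ := by
  induction h with
  | left hm => exact .contrL_of_mem hm hC
  | right hm => exact .contrR_of_mem hm hC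
  | @neg s _ _ ih =>
    cases s
    · exact ih (.negL hC)
    · exact ih (.negR hC)

theorem Occurs.mono {Γ Δ Γ' Δ' s C} (h : Occurs Γ Δ s C) (hΓ : Γ ⊆ Γ') (hΔ : Δ ⊆ Δ') :
    Occurs Γ' Δ' s C := by
  induction h with
  | left hm => exact .left (hΓ hm)
  | right hm => exact .right (hΔ hm)
  | neg _ ih => exact .neg ih

theorem Occurs.elim_left_right {Γ Δ C C'} (hC : Occurs Γ Δ .left C) (hC' : Occurs Γ Δ .right C')
    (h : Cl (C :: Γ) (C' :: Δ)) : Cl Γ Δ :=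
  hC.elim ((hC'.mono (List.subset_cons_self _ _) (.refl _)).elim h)

theorem Occurs.rename {Γ Δ s C} (h : Occurs Γ Δ s C) (f : Nat → Nat) :
    Occurs (Γ.map (Fm.rename f)) (Δ.map (Fm.rename f)) s (C.rename f) := by
  induction h with
  | left hm => exact .left (List.mem_map_of_mem hm)
  | right hm => exact .right (List.mem_map_of_mem hm)
  | neg _ ih => exact .neg ih

/-- `Matches Γ Δ s A`: a formula `A` on side `s` of a derivation is available in `Γ ⊢ Δ` up to
erasing double negations. -/
inductive Matches (Γ Δ : List Fm) : Side → Fm → Prop where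
  | erase {s A C} : ErasesTo A C → Occurs Γ Δ s C → Matches Γ Δ s A
  | neg {s A} : Matches Γ Δ s.flip A → Matches Γ Δ s (.neg A)

theorem Matches.mono {Γ Δ Γ' Δ' s A} (h : Matches Γ Δ s A) (hΓ : Γ ⊆ Γ') (hΔ : Δ ⊆ Δ') :
    Matches Γ' Δ' s A := by
  induction h with
  | erase hA hC => exact .erase hA (hC.mono hΓ hΔ)
  | neg _ ih => exact .neg ih

theorem Matches.rename {Γ Δ s A} (h : Matches Γ Δ s A) (f : Nat → Nat) :
    Matches (Γ.map (Fm.rename f)) (Δ.map (Fm.rename f)) s (A.rename f) := by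
  induction h with
  | erase hA hC => exact .erase (hA.rename f) (hC.rename f)
  | neg _ ih => exact .neg ih

theorem Matches.of_neg {Γ Δ s A} (h : Matches Γ Δ s (.neg A)) : Matches Γ Δ s.flip A := by
  rcases h with ⟨hA, hC⟩ | h
  · cases hA with
    | dn hA => exact .neg (by rw [Side.flip_flip]; exact .erase hA hC)
    | neg hA => exact .erase hA (.neg hC)
  · exact h

theorem Matches.occurs_atom {Γ Δ s p l} (h : Matches Γ Δ s (.atom p l)) :
    Occurs Γ Δ s (.atom p l) := by
  cases h with | erase h hC => cases h; exact hC

theorem Matches.occurs_top {Γ Δ s} (h : Matches Γ Δ s .top) : Occurs Γ Δ s .top := by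
  cases h with | erase h hC => cases h; exact hC

theorem Matches.occurs_bot {Γ Δ s} (h : Matches Γ Δ s .bot) : Occurs Γ Δ s .bot := by
  cases h with | erase h hC => cases h; exact hC

theorem Matches.exists_of_and {Γ Δ s A B} (h : Matches Γ Δ s (.and A B)) :
    ∃ C D, ErasesTo A C ∧ ErasesTo B D ∧ Occurs Γ Δ s (.and C D) := by
  cases h with | erase h hC => cases h with | and hA hB => exact ⟨_, _, hA, hB, hC⟩

theorem Matches.exists_of_or {Γ Δ s A B} (h : Matches Γ Δ s (.or A B)) :
    ∃ C D, ErasesTo A C ∧ ErasesTo B D ∧ Occurs Γ Δ s (.or C D) := by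
  cases h with | erase h hC => cases h with | or hA hB => exact ⟨_, _, hA, hB, hC⟩

theorem Matches.exists_of_imp {Γ Δ s A B} (h : Matches Γ Δ s (.imp A B)) :
    ∃ C D, ErasesTo A C ∧ ErasesTo B D ∧ Occurs Γ Δ s (.imp C D) := by
  cases h with | erase h hC => cases h with | imp hA hB => exact ⟨_, _, hA, hB, hC⟩

theorem Matches.exists_of_all {Γ Δ s A} (h : Matches Γ Δ s (.all A)) :
    ∃ C, ErasesTo A C ∧ Occurs Γ Δ s (.all C) := by
  cases h with | erase h hC => cases h with | all hA => exact ⟨_, hA, hC⟩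

theorem Matches.exists_of_ex {Γ Δ s A} (h : Matches Γ Δ s (.ex A)) :
    ∃ C, ErasesTo A C ∧ Occurs Γ Δ s (.ex C) := by
  cases h with | erase h hC => cases h with | ex hA => exact ⟨_, hA, hC⟩

theorem Matches.head_left {Γ Δ A C} (h : ErasesTo A C) : Matches (C :: Γ) Δ .left A :=
  .erase h (.left List.mem_cons_self)

theorem Matches.head_right {Γ Δ A C} (h : ErasesTo A C) : Matches Γ (C :: Δ) .right A :=
  .erase h (.right List.mem_cons_self)

/-- The two sides may erase `A` differently, so the axiom `A ⊢ A` is η-expanded down to atoms. -/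
theorem Cl.of_matches_left_right {A : Fm} {Γ Δ} (hl : Matches Γ Δ .left A)
    (hr : Matches Γ Δ .right A) : Cl Γ Δ := by
  induction A generalizing Γ Δ with
  | atom p l =>
    exact hl.occurs_atom.elim_left_right hr.occurs_atom ((Cl.ax _).weaken Γ Δ)
  | top => exact hr.occurs_top.elim .topR
  | bot => exact hl.occurs_bot.elim .botL
  | neg _ ih => exact ih hr.of_neg hl.of_neg
  | and _ _ ih₁ ih₂ =>
    obtain ⟨_, _, hl₁, hl₂, hl⟩ := hl.exists_of_and
    obtain ⟨_, _, hr₁, hr₂, hr⟩ := hr.exists_of_and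
    refine hl.elim_left_right hr (.andL (.andR ?_ ?_))
    · exact ih₁ (.head_left hl₁) (.head_right hr₁)
    · exact ih₂ (.erase hl₂ (.left (by simp))) (.head_right hr₂)
  | or _ _ ih₁ ih₂ =>
    obtain ⟨_, _, hl₁, hl₂, hl⟩ := hl.exists_of_or
    obtain ⟨_, _, hr₁, hr₂, hr⟩ := hr.exists_of_or
    refine hl.elim_left_right hr (.orL (.orR1 ?_) (.orR2 ?_))
    · exact ih₁ (.head_left hl₁) (.head_right hr₁)
    · exact ih₂ (.head_left hl₂) (.head_right hr₂)
  | imp _ _ ih₁ ih₂ =>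
    obtain ⟨_, _, hl₁, hl₂, hl⟩ := hl.exists_of_imp
    obtain ⟨_, _, hr₁, hr₂, hr⟩ := hr.exists_of_imp
    refine hl.elim_left_right hr (.impR (.perm (.swap _ _ _) (.refl _) (.impL ?_ ?_)))
    · exact ih₁ (.head_left hr₁) (.head_right hl₁)
    · exact ih₂ (.head_left hl₂) (.head_right hr₂)
  | all _ ih =>
    obtain ⟨_, hl₁, hl⟩ := hl.exists_of_all
    obtain ⟨_, hr₁, hr⟩ := hr.exists_of_all
    refine hl.elim_left_right hr (.allR (.allL (.var 0) ?_))
    rw [Fm.inst_var_zero_rename_liftR_succ]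
    exact ih (.head_left hl₁) (.head_right hr₁)
  | ex _ ih =>
    obtain ⟨_, hl₁, hl⟩ := hl.exists_of_ex
    obtain ⟨_, hr₁, hr⟩ := hr.exists_of_ex
    refine hl.elim_left_right hr (.exL (.exR (.var 0) ?_))
    rw [Fm.inst_var_zero_rename_liftR_succ]
    exact ih (.head_left hl₁) (.head_right hr₁)

def SequentMatches (Γ Δ Γ' Δ' : List Fm) : Prop :=
  (∀ A ∈ Γ, Matches Γ' Δ' .left A) ∧ ∀ A ∈ Δ, Matches Γ' Δ' .right A

namespace SequentMatches

variable {Γ Δ Γ' Δ' : List Fm}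

theorem nil : SequentMatches [] [] Γ' Δ' :=
  ⟨by simp, by simp⟩

theorem of_subset {Γ₀ Δ₀} (h : SequentMatches Γ Δ Γ' Δ') (hΓ : Γ₀ ⊆ Γ) (hΔ : Δ₀ ⊆ Δ) :
    SequentMatches Γ₀ Δ₀ Γ' Δ' :=
  ⟨fun A hA => h.1 A (hΓ hA), fun A hA => h.2 A (hΔ hA)⟩

theorem tail_left {A} (h : SequentMatches (A :: Γ) Δ Γ' Δ') : SequentMatches Γ Δ Γ' Δ' :=
  h.of_subset (List.subset_cons_self _ _) (.refl _)

theorem tail_right {A} (h : SequentMatches Γ (A :: Δ) Γ' Δ') : SequentMatches Γ Δ Γ' Δ' :=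
  h.of_subset (.refl _) (List.subset_cons_self _ _)

theorem head_left {A} (h : SequentMatches (A :: Γ) Δ Γ' Δ') : Matches Γ' Δ' .left A :=
  h.1 A List.mem_cons_self

theorem head_right {A} (h : SequentMatches Γ (A :: Δ) Γ' Δ') : Matches Γ' Δ' .right A :=
  h.2 A List.mem_cons_self

theorem cons_left {A} (hA : Matches Γ' Δ' .left A) (h : SequentMatches Γ Δ Γ' Δ') :
    SequentMatches (A :: Γ) Δ Γ' Δ' :=
  ⟨List.forall_mem_cons.2 ⟨hA, h.1⟩, h.2⟩

theorem cons_right {A} (hA : Matches Γ' Δ' .right A) (h : SequentMatches Γ Δ Γ' Δ') :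
    SequentMatches Γ (A :: Δ) Γ' Δ' :=
  ⟨h.1, List.forall_mem_cons.2 ⟨hA, h.2⟩⟩

theorem mono {Γ'' Δ''} (h : SequentMatches Γ Δ Γ' Δ') (hΓ : Γ' ⊆ Γ'') (hΔ : Δ' ⊆ Δ'') :
    SequentMatches Γ Δ Γ'' Δ'' :=
  ⟨fun A hA => (h.1 A hA).mono hΓ hΔ, fun A hA => (h.2 A hA).mono hΓ hΔ⟩

theorem extend_left {A C} (h : SequentMatches Γ Δ Γ' Δ') (hA : ErasesTo A C) :
    SequentMatches (A :: Γ) Δ (C :: Γ') Δ' :=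
  (h.mono (List.subset_cons_self _ _) (.refl _)).cons_left (.head_left hA)

theorem extend_right {A C} (h : SequentMatches Γ Δ Γ' Δ') (hA : ErasesTo A C) :
    SequentMatches Γ (A :: Δ) Γ' (C :: Δ') :=
  (h.mono (.refl _) (List.subset_cons_self _ _)).cons_right (.head_right hA)

theorem shift (h : SequentMatches Γ Δ Γ' Δ') :
    SequentMatches (Γ.map Fm.shift) (Δ.map Fm.shift) (Γ'.map Fm.shift) (Δ'.map Fm.shift) := by
  constructor <;> simp only [List.forall_mem_map]
  exacts [fun A hA => (h.1 A hA).rename _, fun A hA => (h.2 A hA).rename _]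

end SequentMatches

theorem Cl.of_sequentMatches {Γ Δ Γ' Δ'} (h : Cl Γ Δ) (hm : SequentMatches Γ Δ Γ' Δ') :
    Cl Γ' Δ' := by
  induction h generalizing Γ' Δ' with
  | ax A => exact .of_matches_left_right hm.head_left hm.head_right
  | perm hΓ hΔ _ ih => exact ih (hm.of_subset hΓ.subset hΔ.subset)
  | contrL _ ih => exact ih (hm.cons_left hm.head_left)
  | contrR _ ih => exact ih (hm.cons_right hm.head_right)
  | weakL _ ih => exact ih hm.tail_left
  | weakR _ ih => exact ih hm.tail_right
  | topR => exact hm.head_right.occurs_top.elim .topR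
  | botL => exact hm.head_left.occurs_bot.elim .botL
  | negL _ ih => exact ih (hm.tail_left.cons_right hm.head_left.of_neg)
  | negR _ ih => exact ih (hm.tail_right.cons_left hm.head_right.of_neg)
  | andL _ ih =>
    obtain ⟨_, _, hA, hB, hC⟩ := hm.head_left.exists_of_and
    exact hC.elim (.andL (ih ((hm.tail_left.extend_left hB).extend_left hA)))
  | andR _ _ ih₁ ih₂ =>
    obtain ⟨_, _, hA, hB, hC⟩ := hm.head_right.exists_of_and
    exact hC.elim (.andR (ih₁ (hm.tail_right.extend_right hA))
      (ih₂ (hm.tail_right.extend_right hB)))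
  | orL _ _ ih₁ ih₂ =>
    obtain ⟨_, _, hA, hB, hC⟩ := hm.head_left.exists_of_or
    exact hC.elim (.orL (ih₁ (hm.tail_left.extend_left hA))
      (ih₂ (hm.tail_left.extend_left hB)))
  | orR1 _ ih =>
    obtain ⟨_, _, hA, -, hC⟩ := hm.head_right.exists_of_or
    exact hC.elim (.orR1 (ih (hm.tail_right.extend_right hA)))
  | orR2 _ ih =>
    obtain ⟨_, _, -, hB, hC⟩ := hm.head_right.exists_of_or
    exact hC.elim (.orR2 (ih (hm.tail_right.extend_right hB)))
  | impL _ _ ih₁ ih₂ =>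
    obtain ⟨_, _, hA, hB, hC⟩ := hm.head_left.exists_of_imp
    exact hC.elim (.impL (ih₁ (hm.tail_left.extend_right hA))
      (ih₂ (hm.tail_left.extend_left hB)))
  | impR _ ih =>
    obtain ⟨_, _, hA, hB, hC⟩ := hm.head_right.exists_of_imp
    exact hC.elim (.impR (ih ((hm.tail_right.extend_left hA).extend_right hB)))
  | allL t _ ih =>
    obtain ⟨_, hA, hC⟩ := hm.head_left.exists_of_all
    exact hC.elim (.allL t (ih (hm.tail_left.extend_left (hA.subst _))))
  | allR _ ih =>
    obtain ⟨_, hA, hC⟩ := hm.head_right.exists_of_all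
    exact hC.elim (.allR (ih (hm.tail_right.shift.extend_right hA)))
  | exL _ ih =>
    obtain ⟨_, hA, hC⟩ := hm.head_left.exists_of_ex
    exact hC.elim (.exL (ih (hm.tail_left.shift.extend_left hA)))
  | exR t _ ih =>
    obtain ⟨_, hA, hC⟩ := hm.head_right.exists_of_ex
    exact hC.elim (.exR t (ih (hm.tail_right.extend_right (hA.subst _))))

theorem stmt16 (A : Fm) : Cl [] [A] ↔ Intu [] (some A.kgg) := by
  constructor
  · intro h
    rw [Fm.kgg_eq_dn_kggBody]
    exact .negR h.intu_kggSequent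
  · intro h
    exact h.toCl.of_sequentMatches (SequentMatches.nil.extend_right (.kgg A))
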